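/- arXiv:1408.7002 — 5 statements merged into one kernel-verified Lean document; each statement's English description precedes it below -/
import Mathlib

section
/- For the star graph Sbar_E with E edges, the first Betti number of the n-particle discrete configuration graph is γ_n^E = E · binom(E-1, n-1) - binom(E+1, n) + 1, assuming the configuration graph is connected and 1 ≤ n ≤ E. -/
open scoped symmDiff

/-- The `n`-particle discrete configuration graph of the star graph `Sbar_E`
(center `0`, leaves `1,…,E`): vertices are `n`-element subsets of the `E+1` vertices,
and two configurations are adjacent iff their symmetric difference is `{0, v}` for some
leaf `v` (one particle moves along the edge `{0,v}`, whose endpoints avoid the other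
particles). -/
def starConfigGraph (E n : ℕ) : SimpleGraph {s : Finset (Fin (E + 1)) // s.card = n} where
  Adj a b := ∃ v : Fin (E + 1), v ≠ 0 ∧ symmDiff a.val b.val = {0, v}
  symm := by
    constructor
    rintro a b ⟨v, hv, h⟩
    exact ⟨v, hv, by rwa [symmDiff_comm]⟩
  loopless := by
    constructor
    rintro a ⟨v, hv, h⟩
    rw [symmDiff_self] at h
    have h0 : (0 : Fin (E + 1)) ∈ (⊥ : Finset (Fin (E + 1))) := by
      rw [h]; simp
    simp at h0


def StarDom (E n : ℕ) :=
  Σ v : {v : Fin (E + 1) // v ≠ 0},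
    {s : Finset (Fin (E + 1)) // s ∈ Finset.powersetCard (n - 1) ((Finset.univ.erase 0).erase v.1)}

instance (E n : ℕ) : Fintype (StarDom E n) := by unfold StarDom; infer_instance

lemma starDom_card (E n : ℕ) (hE : 1 ≤ E) :
    Nat.card (StarDom E n) = E * (E - 1).choose (n - 1) := by
  rw [Nat.card_eq_fintype_card]
  unfold StarDom
  rw [Fintype.card_sigma]
  have h2 : ∀ v : {v : Fin (E + 1) // v ≠ 0},
      ((Finset.univ.erase (0 : Fin (E + 1))).erase v.1).card = E - 1 := by
    intro v
    rw [Finset.card_erase_of_mem, Finset.card_erase_of_mem] <;>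
      simp [Finset.mem_erase, v.2]
  trans ∑ _v : {v : Fin (E + 1) // v ≠ 0}, (E - 1).choose (n - 1)
  · refine Finset.sum_congr rfl fun v _ => ?_
    rw [Fintype.card_of_subtype (Finset.powersetCard (n - 1) ((Finset.univ.erase 0).erase v.1))
      (fun x => Iff.rfl), Finset.card_powersetCard, h2]
  · rw [Finset.sum_const, smul_eq_mul]
    congr 1
    simp [Fintype.card_subtype, Finset.filter_ne']

lemma mem_bits {E n : ℕ} {v : Fin (E + 1)} {s : Finset (Fin (E + 1))}
    (hs : s ∈ Finset.powersetCard (n - 1) ((Finset.univ.erase 0).erase v)) :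
    0 ∉ s ∧ v ∉ s ∧ s.card = n - 1 := by
  rw [Finset.mem_powersetCard] at hs
  obtain ⟨hsub, hcard⟩ := hs
  refine ⟨fun h => ?_, fun h => ?_, hcard⟩
  · exact (Finset.mem_erase.1 (Finset.mem_erase.1 (hsub h)).2).1 rfl
  · exact (Finset.mem_erase.1 (hsub h)).1 rfl

lemma insert_card {E n : ℕ} (hn : 1 ≤ n) {x : Fin (E + 1)} {s : Finset (Fin (E + 1))}
    (hx : x ∉ s) (hcard : s.card = n - 1) : (insert x s).card = n := by
  rw [Finset.card_insert_of_notMem hx, hcard]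
  omega

lemma adj_of_bits {E : ℕ} {v : Fin (E + 1)} (hv : v ≠ 0) {s : Finset (Fin (E + 1))}
    (h0 : 0 ∉ s) (hvs : v ∉ s) :
    symmDiff (insert 0 s) (insert v s) = ({0, v} : Finset (Fin (E + 1))) := by
  ext x
  simp only [Finset.mem_symmDiff, Finset.mem_insert, Finset.mem_singleton]
  by_cases h1 : x = 0 <;> by_cases h2 : x = v <;> by_cases h3 : x ∈ s <;> simp_all

noncomputable def toEdge (E n : ℕ) (hn : 1 ≤ n) (d : StarDom E n) :
    (starConfigGraph E n).edgeSet :=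
  ⟨s(⟨insert 0 d.2.1, insert_card hn (mem_bits d.2.2).1 (mem_bits d.2.2).2.2⟩,
     ⟨insert d.1.1 d.2.1, insert_card hn (mem_bits d.2.2).2.1 (mem_bits d.2.2).2.2⟩),
   ⟨d.1.1, d.1.2, adj_of_bits d.1.2 (mem_bits d.2.2).1 (mem_bits d.2.2).2.1⟩⟩

lemma key {E n : ℕ} {a b : {s : Finset (Fin (E + 1)) // s.card = n}} {v : Fin (E + 1)}
    (hv : v ≠ 0) (h : symmDiff a.1 b.1 = {0, v}) (h0a : 0 ∈ a.1) :
    a.1 = insert 0 (a.1 ∩ b.1) ∧ b.1 = insert v (a.1 ∩ b.1) ∧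
      (a.1 ∩ b.1) ∈ Finset.powersetCard (n - 1) ((Finset.univ.erase 0).erase v) := by
  have h' : ∀ x, ((x ∈ a.1 ∧ x ∉ b.1) ∨ (x ∈ b.1 ∧ x ∉ a.1)) ↔ (x = 0 ∨ x = v) := by
    intro x
    rw [← Finset.mem_symmDiff, h]
    simp
  have h0b : 0 ∉ b.1 := by
    have := (h' 0).2 (Or.inl rfl); tauto
  have hvb : v ∈ b.1 ∧ v ∉ a.1 := by
    rcases (h' v).2 (Or.inr rfl) with h1 | h1
    · exfalso
      have hba : b.1 ⊆ a.1 := by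
        intro x hx
        by_contra hxa
        rcases (h' x).1 (Or.inr ⟨hx, hxa⟩) with rfl | rfl
        · exact h0b hx
        · exact h1.2 hx
      have : b.1 = a.1 := Finset.eq_of_subset_of_card_le hba (by rw [a.2, b.2])
      rw [← this] at h0a
      exact h0b h0a
    · exact h1
  have ha : a.1 = insert 0 (a.1 ∩ b.1) := by
    ext x
    simp only [Finset.mem_insert, Finset.mem_inter]
    constructor
    · intro hx
      by_cases hxb : x ∈ b.1
      · exact Or.inr ⟨hx, hxb⟩
      · rcases (h' x).1 (Or.inl ⟨hx, hxb⟩) with rfl | rfl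
        · exact Or.inl rfl
        · exact absurd hx hvb.2
    · rintro (rfl | ⟨hx, _⟩) <;> assumption
  have hb : b.1 = insert v (a.1 ∩ b.1) := by
    ext x
    simp only [Finset.mem_insert, Finset.mem_inter]
    constructor
    · intro hx
      by_cases hxa : x ∈ a.1
      · exact Or.inr ⟨hxa, hx⟩
      · rcases (h' x).1 (Or.inr ⟨hx, hxa⟩) with rfl | rfl
        · exact absurd hx h0b
        · exact Or.inl rfl
    · rintro (rfl | ⟨_, hx⟩) <;> first | exact hvb.1 | assumption
  have h0i : 0 ∉ a.1 ∩ b.1 := fun h => h0b (Finset.mem_inter.1 h).2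
  have hvi : v ∉ a.1 ∩ b.1 := fun h => hvb.2 (Finset.mem_inter.1 h).1
  refine ⟨ha, hb, Finset.mem_powersetCard.2 ⟨?_, ?_⟩⟩
  · intro x hx
    simp only [Finset.mem_erase, Finset.mem_univ, and_true]
    exact ⟨fun h => hvi (h ▸ hx), fun h => h0i (h ▸ hx)⟩
  · have := a.2
    rw [ha, Finset.card_insert_of_notMem h0i] at this
    omega

lemma toEdge_bijective (E n : ℕ) (hn : 1 ≤ n) : Function.Bijective (toEdge E n hn) := by
  constructor
  · rintro ⟨⟨v₁, hv₁⟩, s₁, hs₁⟩ ⟨⟨v₂, hv₂⟩, s₂, hs₂⟩ h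
    obtain ⟨h01, hv1s, _⟩ := mem_bits hs₁
    obtain ⟨h02, hv2s, _⟩ := mem_bits hs₂
    simp only [toEdge, Subtype.mk.injEq, Sym2.eq, Sym2.rel_iff', Sym2.eq_iff, Prod.mk.injEq,
      Prod.swap_prod_mk] at h
    replace h := Sym2.eq_iff.1 (congrArg Subtype.val h)
    simp only [Subtype.mk.injEq] at h
    rcases h with ⟨h1, h2⟩ | ⟨h1, h2⟩
    · have hs : s₁ = s₂ := by
        rw [← Finset.erase_insert h01, ← Finset.erase_insert h02, h1]
      subst hs
      have hveq : v₁ = v₂ := by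
        have : v₁ ∈ insert v₂ s₁ := h2 ▸ Finset.mem_insert_self v₁ s₁
        rcases Finset.mem_insert.1 this with h | h
        · exact h
        · exact absurd h hv1s
      subst hveq
      rfl
    · exfalso
      have : (0 : Fin (E + 1)) ∈ insert v₂ s₂ := h1 ▸ Finset.mem_insert_self 0 s₁
      rcases Finset.mem_insert.1 this with h | h
      · exact hv₂ h.symm
      · exact h02 h
  · rintro ⟨e, he⟩
    induction e using Sym2.ind with
    | _ a b =>
      rw [SimpleGraph.mem_edgeSet] at he
      obtain ⟨v, hv, hsd⟩ := he
      by_cases h0a : 0 ∈ a.1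
      · obtain ⟨ha, hb, hmem⟩ := key hv hsd h0a
        refine ⟨⟨⟨v, hv⟩, ⟨a.1 ∩ b.1, hmem⟩⟩, ?_⟩
        apply Subtype.ext
        simp only [toEdge]
        exact Sym2.eq_iff.2 (Or.inl ⟨Subtype.ext ha.symm, Subtype.ext hb.symm⟩)
      · have h0b : 0 ∈ b.1 := by
          have h0 : (0 : Fin (E + 1)) ∈ symmDiff a.1 b.1 := by rw [hsd]; simp
          rw [Finset.mem_symmDiff] at h0
          tauto
        obtain ⟨hb, ha, hmem⟩ := key hv (by rwa [symmDiff_comm]) h0b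
        refine ⟨⟨⟨v, hv⟩, ⟨b.1 ∩ a.1, hmem⟩⟩, ?_⟩
        apply Subtype.ext
        simp only [toEdge]
        exact Sym2.eq_iff.2 (Or.inr ⟨Subtype.ext hb.symm, Subtype.ext ha.symm⟩)

/-- For the star graph with `E` edges, the first Betti number
(#edges − #vertices + 1, assuming the configuration graph is connected) of the
`n`-particle discrete configuration graph is
`γ_n^E = E·C(E-1, n-1) - C(E+1, n) + 1`. -/
theorem starConfig_betti (E n : ℕ) (hE : 2 ≤ E) (hn : 1 ≤ n) (hnE : n ≤ E)
    (hconn : (starConfigGraph E n).Connected) :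
    (Nat.card (starConfigGraph E n).edgeSet : ℤ)
        - (Nat.card {s : Finset (Fin (E + 1)) // s.card = n} : ℤ) + 1
      = (E : ℤ) * ((E - 1).choose (n - 1) : ℤ) - ((E + 1).choose n : ℤ) + 1 := by
  have hedge : Nat.card (starConfigGraph E n).edgeSet = E * (E - 1).choose (n - 1) := by
    rw [← Nat.card_eq_of_bijective _ (toEdge_bijective E n hn)]
    exact starDom_card E n (by omega)
  have hvert : Nat.card {s : Finset (Fin (E + 1)) // s.card = n} = (E + 1).choose n := by
    rw [Nat.card_eq_fintype_card, Fintype.card_finset_len]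
    simp
  rw [hedge, hvert]
  push_cast
  ring
end

section
/- Define γ_k^E = E·binom(E-1, k-1) - binom(E+1, k) + 1 and α_k^E recursively by α_k^E = γ_k^E - Σ_{i=1}^{k-2} binom(E, i)·α_{k-i}^{E-i} (with the empty sum for k = 2, so α₂^E = γ₂^E). Then for all 2 ≤ k ≤ E, α_k^E = (-1)^k · binom(E-1, k). -/
/-- `γ_k^E = E·C(E-1, k-1) - C(E+1, k) + 1`, the first Betti number of the `k`-particle
configuration graph of the star with `E` edges. -/
def gammaStar (E k : ℕ) : ℤ :=
  (E : ℤ) * ((E - 1).choose (k - 1) : ℤ) - ((E + 1).choose k : ℤ) + 1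

/-- `α_k^E = γ_k^E - Σ_{i=1}^{k-2} C(E, i)·α_{k-i}^{E-i}` (empty sum for `k = 2`). -/
def alphaStar : ℕ → ℕ → ℤ
  | E, k =>
    gammaStar E k -
      ∑ i ∈ (Finset.Icc 1 (k - 2)).attach,
        ((E.choose i.1 : ℤ)) * alphaStar (E - i.1) (k - i.1)
termination_by E k => k
decreasing_by
  have h := Finset.mem_Icc.mp i.2
  omega

/-- Trinomial revision, without side conditions on `n`. -/
lemma choose_mul' (n k s : ℕ) (hsk : s ≤ k) :
    n.choose k * k.choose s = n.choose s * (n - s).choose (k - s) := by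
  by_cases h : k ≤ n
  · exact Nat.choose_mul hsk
  · push_neg at h
    rw [Nat.choose_eq_zero_of_lt h, Nat.zero_mul]
    by_cases hs : s ≤ n
    · rw [Nat.choose_eq_zero_of_lt (by omega : n - s < k - s), Nat.mul_zero]
    · rw [Nat.choose_eq_zero_of_lt (by omega), Nat.zero_mul]

/-- Truncated alternating sum of binomial coefficients. -/
lemma alt_sum (n : ℕ) : ∀ m : ℕ,
    ∑ j ∈ Finset.range (m + 1), (-1 : ℤ) ^ j * ((n + 1).choose j : ℤ)
      = (-1) ^ m * (n.choose m : ℤ) := by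
  intro m
  induction m with
  | zero => simp
  | succ m ih =>
    rw [Finset.sum_range_succ, ih, Nat.choose_succ_succ n m]
    push_cast
    rw [pow_succ]
    ring

lemma two_mul_choose_two (n : ℕ) : 2 * (n.choose 2 : ℤ) = (n : ℤ) * ((n : ℤ) - 1) := by
  induction n with
  | zero => simp
  | succ n ih =>
    rw [Nat.choose_succ_succ n 1, Nat.choose_one_right]
    push_cast
    linear_combination ih

lemma gamma_step (F m : ℕ) (h : m + 1 ≤ F) :
    gammaStar (F + 1) (m + 2) = gammaStar F (m + 1) + (m + 1 : ℤ) * (F.choose (m + 2) : ℤ) := by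
  obtain ⟨G, rfl⟩ : ∃ G, F = G + 1 := ⟨F - 1, by omega⟩
  unfold gammaStar
  have e1 : G + 1 + 1 + 1 = G + 3 := by ring
  have e2 : G + 1 + 1 - 1 = G + 1 := by omega
  have e3 : G + 1 - 1 = G := by omega
  have e4 : m + 2 - 1 = m + 1 := by omega
  have e5 : m + 1 - 1 = m := by omega
  rw [e1, e2, e3, e4, e5]
  have h1 : (((G + 3).choose (m + 2) : ℕ) : ℤ)
      = ((G + 2).choose (m + 1) : ℤ) + ((G + 2).choose (m + 2) : ℤ) := by
    exact_mod_cast Nat.choose_succ_succ (G + 2) (m + 1)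
  have h2 : (((G + 2).choose (m + 2) : ℕ) : ℤ)
      = ((G + 1).choose (m + 1) : ℤ) + ((G + 1).choose (m + 2) : ℤ) := by
    exact_mod_cast Nat.choose_succ_succ (G + 1) (m + 1)
  have h3 : ((G : ℤ) + 2) * ((G + 1).choose (m + 1) : ℤ)
      = ((G + 2).choose (m + 2) : ℤ) * ((m : ℤ) + 2) := by
    exact_mod_cast Nat.add_one_mul_choose_eq (G + 1) (m + 1)
  have h4 : ((G : ℤ) + 1) * (G.choose m : ℤ)
      = ((G + 1).choose (m + 1) : ℤ) * ((m : ℤ) + 1) := by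
    exact_mod_cast Nat.add_one_mul_choose_eq G m
  push_cast
  linear_combination h3 - h1 - h4 + ((m : ℤ) + 1) * h2

/-- The key identity: `Σ_{i=0}^{k-2} (-1)^{k-i} C(E,i) C(E-1-i, k-i) = γ_k^E`. -/
lemma key_s9 : ∀ k : ℕ, 2 ≤ k → ∀ E : ℕ, k ≤ E →
    (∑ i ∈ Finset.range (k - 1),
      (-1 : ℤ) ^ (k - i) * (E.choose i : ℤ) * ((E - 1 - i).choose (k - i) : ℤ))
      = gammaStar E k := by
  intro k hk
  induction k, hk using Nat.le_induction with
  | base =>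
    intro E hE
    rw [show (2 - 1 : ℕ) = 1 from rfl, Finset.sum_range_one]
    simp only [Nat.sub_zero, Nat.choose_zero_right, Nat.cast_one, mul_one]
    norm_num
    unfold gammaStar
    rw [Nat.choose_one_right]
    have hc : ((E - 1 : ℕ) : ℤ) = (E : ℤ) - 1 := by omega
    rw [hc]
    have hm := two_mul_choose_two (E - 1)
    rw [hc] at hm
    have h := two_mul_choose_two (E + 1)
    push_cast at h
    have goal2 : 2 * (((E - 1).choose 2 : ℕ) : ℤ)
        = 2 * ((E : ℤ) * ((E : ℤ) - 1) - ((E + 1).choose 2 : ℤ) + 1) := by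
      linear_combination hm + h
    linarith
  | succ n hn IH =>
    intro E hE
    obtain ⟨m, rfl⟩ : ∃ m, n = m + 1 := ⟨n - 1, by omega⟩
    obtain ⟨F, rfl⟩ : ∃ F, E = F + 1 := ⟨E - 1, by omega⟩
    have hmF : m + 1 ≤ F := by omega
    rw [show (m + 1 + 1 - 1 : ℕ) = m + 1 from by omega, Finset.sum_range_succ']
    -- rewrite each shifted summand
    have hsplit : ∀ i ∈ Finset.range m,
        (-1 : ℤ) ^ (m + 1 + 1 - (i + 1)) * ((F + 1).choose (i + 1) : ℤ)
            * ((F + 1 - 1 - (i + 1)).choose (m + 1 + 1 - (i + 1)) : ℤ)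
        = (-1 : ℤ) ^ (m + 1 - i) * (F.choose i : ℤ) * ((F - 1 - i).choose (m + 1 - i) : ℤ)
          + ((F.choose (m + 2) : ℤ) * (((m + 2).choose (i + 1)) : ℤ))
              * ((-1) ^ (m + 1 - i)) := by
      intro i hi
      have hi' : i < m := Finset.mem_range.mp hi
      have e1 : m + 1 + 1 - (i + 1) = m + 1 - i := by omega
      have e2 : F + 1 - 1 - (i + 1) = F - 1 - i := by omega
      rw [e1, e2, Nat.choose_succ_succ F i]
      have tri : (F.choose (i + 1) : ℤ) * ((F - 1 - i).choose (m + 1 - i) : ℤ)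
          = (F.choose (m + 2) : ℤ) * ((m + 2).choose (i + 1) : ℤ) := by
        have h := choose_mul' F (m + 2) (i + 1) (by omega)
        rw [show F - (i + 1) = F - 1 - i from by omega,
          show m + 2 - (i + 1) = m + 1 - i from by omega] at h
        exact_mod_cast h.symm
      push_cast
      linear_combination ((-1 : ℤ) ^ (m + 1 - i)) * tri
    rw [Finset.sum_congr rfl hsplit, Finset.sum_add_distrib]
    have hIH := IH F (by omega)
    rw [show (m + 1 - 1 : ℕ) = m from by omega] at hIH
    rw [hIH]
    -- evaluate the second sum
    have hB : ∑ i ∈ Finset.range m, (-1 : ℤ) ^ i * ((m + 2).choose (i + 1) : ℤ)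
        = 1 - (-1) ^ m * ((m : ℤ) + 1) := by
      have h := alt_sum (m + 1) m
      rw [Finset.sum_range_succ'] at h
      rw [Nat.choose_succ_self_right] at h
      simp only [pow_zero, Nat.choose_zero_right, Nat.cast_one, one_mul, mul_one] at h
      have h2 : ∑ i ∈ Finset.range m, (-1 : ℤ) ^ (i + 1) * ((m + 2).choose (i + 1) : ℤ)
          = - ∑ i ∈ Finset.range m, (-1 : ℤ) ^ i * ((m + 2).choose (i + 1) : ℤ) := by
        rw [← Finset.sum_neg_distrib]
        exact Finset.sum_congr rfl fun i _ => by rw [pow_succ]; ring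
      rw [h2] at h
      push_cast at h ⊢
      linarith
    have hsgn : ∀ i ∈ Finset.range m, ((F.choose (m + 2) : ℤ) * (((m + 2).choose (i + 1)) : ℤ))
          * ((-1 : ℤ) ^ (m + 1 - i))
        = ((F.choose (m + 2) : ℤ) * (-1) ^ (m + 1))
            * ((-1) ^ i * ((m + 2).choose (i + 1) : ℤ)) := by
      intro i hi
      have hi' : i < m := Finset.mem_range.mp hi
      have : (-1 : ℤ) ^ (m + 1 - i) * (-1 : ℤ) ^ i = (-1 : ℤ) ^ (m + 1) := by
        rw [← pow_add, show m + 1 - i + i = m + 1 from by omega]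
      have hpow : (-1 : ℤ) ^ (m + 1 - i) = (-1 : ℤ) ^ (m + 1) * (-1 : ℤ) ^ i := by
        have hsq : (-1 : ℤ) ^ i * (-1 : ℤ) ^ i = 1 := by
          rw [← pow_add]; exact Even.neg_one_pow ⟨i, by ring⟩
        calc (-1 : ℤ) ^ (m + 1 - i) = (-1 : ℤ) ^ (m + 1 - i) * ((-1 : ℤ) ^ i * (-1 : ℤ) ^ i) := by
              rw [hsq, mul_one]
          _ = (-1 : ℤ) ^ (m + 1) * (-1 : ℤ) ^ i := by rw [← mul_assoc, this]
      rw [hpow]; ring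
    rw [Finset.sum_congr rfl hsgn, ← Finset.mul_sum, hB]
    -- the peeled `i = 0` term
    simp only [Nat.sub_zero, Nat.choose_zero_right, Nat.cast_one, mul_one, one_mul]
    rw [show (F + 1 - 1 : ℕ) = F from by omega]
    rw [gamma_step F m hmF]
    have hodd : (-1 : ℤ) ^ (m + 1) * (-1 : ℤ) ^ m = -1 := by
      rw [← pow_add]; exact Odd.neg_one_pow ⟨m, by ring⟩
    have hpow2 : (-1 : ℤ) ^ (m + 1 + 1) = - (-1 : ℤ) ^ (m + 1) := by
      rw [pow_succ]; ring
    rw [hpow2]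
    have heven : (-1 : ℤ) ^ m * (-1 : ℤ) ^ m = 1 := by
      rw [← pow_add]; exact Even.neg_one_pow ⟨m, by ring⟩
    linear_combination (F.choose (m + 2) : ℤ) * hodd
      + ((F.choose (m + 2) : ℤ) * ((m : ℤ) + 2)) * heven

theorem alphaStar_eq_aux : ∀ k : ℕ, ∀ E : ℕ, 2 ≤ k → k ≤ E →
    alphaStar E k = (-1 : ℤ) ^ k * ((E - 1).choose k : ℤ) := by
  intro k
  induction k using Nat.strong_induction_on with
  | _ k IH =>
    intro E hk hkE
    rw [alphaStar]
    have hsum : ∑ i ∈ (Finset.Icc 1 (k - 2)).attach,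
        ((E.choose i.1 : ℤ)) * alphaStar (E - i.1) (k - i.1)
        = ∑ i ∈ Finset.Icc 1 (k - 2),
            (E.choose i : ℤ) * ((-1 : ℤ) ^ (k - i) * (((E - i - 1).choose (k - i) : ℤ))) := by
      rw [← Finset.sum_attach (Finset.Icc 1 (k - 2))
        (fun i => (E.choose i : ℤ) * ((-1 : ℤ) ^ (k - i) * (((E - i - 1).choose (k - i) : ℤ))))]
      apply Finset.sum_congr rfl
      intro i _
      have hmem := Finset.mem_Icc.mp i.2
      rw [IH (k - i.1) (by omega) (E - i.1) (by omega) (by omega)]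
    rw [hsum]
    have hkey := key_s9 k hk E hkE
    rw [show (k - 1 : ℕ) = (k - 2) + 1 from by omega, Finset.sum_range_succ'] at hkey
    simp only [Nat.sub_zero, Nat.choose_zero_right, Nat.cast_one, mul_one, one_mul] at hkey
    have hIcc : ∑ i ∈ Finset.Icc 1 (k - 2),
        (E.choose i : ℤ) * ((-1 : ℤ) ^ (k - i) * (((E - i - 1).choose (k - i) : ℤ)))
        = ∑ i ∈ Finset.range (k - 2),
            (-1 : ℤ) ^ (k - (i + 1)) * (E.choose (i + 1) : ℤ)
              * ((E - 1 - (i + 1)).choose (k - (i + 1)) : ℤ) := by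
      rw [← Finset.Ico_add_one_right_eq_Icc, Finset.sum_Ico_eq_sum_range]
      rw [show (k - 2 + 1 - 1 : ℕ) = k - 2 from by omega]
      apply Finset.sum_congr rfl
      intro i hi
      rw [show (1 + i : ℕ) = i + 1 from by omega,
        show (E - (i + 1) - 1 : ℕ) = E - 1 - (i + 1) from by omega]
      ring
    rw [hIcc]
    linarith [hkey]

/-- For all `2 ≤ k ≤ E`, `α_k^E = (-1)^k · C(E-1, k)`. -/
theorem alphaStar_eq (E k : ℕ) (hk : 2 ≤ k) (hkE : k ≤ E) :
    alphaStar E k = (-1 : ℤ) ^ k * ((E - 1).choose k : ℤ) := by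
  exact alphaStar_eq_aux k E hk hkE
end

section
/- For integers E ≥ 3 and n ≥ 2, Σ_{k=2}^{E-1} (-1)^k · binom(E-1, k) · binom(n-k+E-1, E-1) = binom(n+E-2, E-1)·(E-2) - binom(n+E-2, E-2) + 1. -/
lemma star_betti_key (n m : ℕ) :
    ∑ k ∈ Finset.range (m + 1),
      (-1 : ℤ) ^ k * (m.choose k : ℤ) * ((n + m - k).choose m : ℤ) = 1 := by
  induction m with
  | zero => simp
  | succ m ih =>
    have hstep : ∀ k ∈ Finset.range (m + 1),
        (-1 : ℤ) ^ (k + 1) * ((m + 1).choose (k + 1) : ℤ)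
            * ((n + (m + 1) - (k + 1)).choose (m + 1) : ℤ)
          = ((-1 : ℤ) ^ k * (m.choose k : ℤ) * ((n + m - k).choose m : ℤ))
            + (((-1 : ℤ) ^ (k + 1) * (m.choose (k + 1) : ℤ)
                  * ((n + (m + 1) - (k + 1)).choose (m + 1) : ℤ))
               - ((-1 : ℤ) ^ k * (m.choose k : ℤ)
                  * ((n + (m + 1) - k).choose (m + 1) : ℤ))) := by
      intro k hk
      rw [Finset.mem_range] at hk
      have h1 : n + (m + 1) - (k + 1) = n + m - k := by omega
      have h2 : n + (m + 1) - k = (n + m - k) + 1 := by omega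
      rw [h1, h2, Nat.choose_succ_succ (n + m - k) m,
        Nat.choose_succ_succ m k]
      push_cast
      ring
    rw [Finset.sum_range_succ', Finset.sum_congr rfl hstep, Finset.sum_add_distrib, ih,
      Finset.sum_range_sub (fun k => (-1 : ℤ) ^ k * (m.choose k : ℤ)
        * ((n + (m + 1) - k).choose (m + 1) : ℤ))]
    simp [Nat.choose_succ_self]

/-- For integers `E ≥ 3` and `n ≥ 2`,
`Σ_{k=2}^{E-1} (-1)^k · C(E-1,k) · C(n-k+E-1, E-1) = C(n+E-2, E-1)·(E-2) - C(n+E-2, E-2) + 1`. -/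
theorem star_betti_sum (E n : ℕ) (hE : 3 ≤ E) (hn : 2 ≤ n) :
    ∑ k ∈ Finset.Icc 2 (E - 1),
        (-1 : ℤ) ^ k * ((E - 1).choose k : ℤ) * ((n + E - 1 - k).choose (E - 1) : ℤ) =
      ((n + E - 2).choose (E - 1) : ℤ) * ((E : ℤ) - 2)
        - ((n + E - 2).choose (E - 2) : ℤ) + 1 := by
  obtain ⟨e, rfl⟩ : ∃ e, E = e + 3 := ⟨E - 3, by omega⟩
  have key := star_betti_key n (e + 2)
  have hset : Finset.range (e + 2 + 1) = insert 0 (insert 1 (Finset.Icc 2 (e + 2))) := by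
    ext x
    simp only [Finset.mem_range, Finset.mem_insert, Finset.mem_Icc]
    omega
  rw [hset] at key
  rw [Finset.sum_insert (by simp), Finset.sum_insert (by simp)] at key
  have hE1 : e + 3 - 1 = e + 2 := by omega
  have hE2 : ∀ k, n + (e + 3) - 1 - k = n + (e + 2) - k := by omega
  have hsum : ∑ k ∈ Finset.Icc 2 (e + 3 - 1),
        (-1 : ℤ) ^ k * ((e + 3 - 1).choose k : ℤ)
          * ((n + (e + 3) - 1 - k).choose (e + 3 - 1) : ℤ)
      = ∑ k ∈ Finset.Icc 2 (e + 2),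
        (-1 : ℤ) ^ k * ((e + 2).choose k : ℤ) * ((n + (e + 2) - k).choose (e + 2) : ℤ) := by
    rw [hE1]
    refine Finset.sum_congr rfl fun k hk => ?_
    rw [hE2]
  rw [hsum]
  have h0 : n + (e + 2) - 0 = (n + e + 1) + 1 := by omega
  have h1 : n + (e + 2) - 1 = n + e + 1 := by omega
  have h2 : n + (e + 3) - 2 = n + e + 1 := by omega
  have h3 : e + 3 - 1 = e + 2 := by omega
  have h4 : e + 3 - 2 = e + 1 := by omega
  rw [h0, h1] at key
  rw [h2, h3, h4]
  have hp : ((n + e + 1 + 1).choose (e + 2) : ℤ)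
      = ((n + e + 1).choose (e + 1) : ℤ) + ((n + e + 1).choose (e + 2) : ℤ) := by
    rw [show e + 2 = (e + 1) + 1 from rfl, Nat.choose_succ_succ]
    push_cast; ring
  simp only [Nat.choose_zero_right, Nat.choose_one_right] at key
  rw [hp] at key
  push_cast at key ⊢
  linarith
end

section
/- Counting lost phases at a cut vertex: the sum over compositions (n₁,...,n_μ) of n into μ nonnegative parts, of Σ_{i: 0 < n_i < n} (ν_i - 1), equals (binom(n+μ-2, n-1) - 1)(ν - μ), where ν = Σᵢ ν_i. -/
open Finset

private lemma fiber_card_AT (k n m : ℕ) (i : Fin (k + 1)) (hm : m ≤ n) :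
    ((Finset.Nat.antidiagonalTuple (k + 1) n).filter fun f => f i = m).card
      = (Finset.Nat.antidiagonalTuple k (n - m)).card := by
  refine Finset.card_nbij' (fun f => fun j => f (i.succAbove j)) (fun g => i.insertNth m g)
    ?_ ?_ ?_ ?_
  · intro f hf
    simp only [Finset.mem_coe, Finset.mem_filter, Finset.Nat.mem_antidiagonalTuple] at hf ⊢
    have h := Fin.sum_univ_succAbove f i
    omega
  · intro g hg
    simp only [Finset.mem_coe, Finset.Nat.mem_antidiagonalTuple] at hg
    simp only [Finset.mem_coe, Finset.mem_filter, Finset.Nat.mem_antidiagonalTuple]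
    refine ⟨?_, by simp⟩
    rw [Fin.sum_univ_succAbove _ i]
    simp only [Fin.insertNth_apply_same, Fin.insertNth_apply_succAbove]
    omega
  · intro f hf
    simp only [Finset.mem_coe, Finset.mem_filter] at hf
    rw [← hf.2]
    exact Fin.insertNth_self_removeNth i f
  · intro g _
    funext j
    simp

private lemma card_AT (k : ℕ) : ∀ n : ℕ,
    (Finset.Nat.antidiagonalTuple (k + 1) n).card = (n + k).choose n := by
  induction k with
  | zero =>
    intro n
    simp [Finset.Nat.antidiagonalTuple_one]
  | succ k ih =>
    intro n
    rw [Finset.card_eq_sum_card_fiberwise (f := fun f => f 0) (t := Finset.range (n + 1))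
      (by intro f hf
          simp only [Finset.mem_coe, Finset.Nat.mem_antidiagonalTuple] at hf
          simp only [Finset.mem_coe, Finset.mem_range]
          have : f 0 ≤ ∑ j, f j := Finset.single_le_sum (fun j _ => Nat.zero_le _) (mem_univ 0)
          omega)]
    have h1 : ∀ m ∈ Finset.range (n + 1),
        ((Finset.Nat.antidiagonalTuple (k + 2) n).filter fun f => f 0 = m).card
          = (n - m + k).choose (n - m) := by
      intro m hm
      rw [fiber_card_AT (k + 1) n m 0 (by simpa using Nat.lt_succ_iff.mp (mem_range.mp hm))]
      exact ih (n - m)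
    rw [Finset.sum_congr rfl h1]
    have h2 : ∀ j ∈ Finset.range (n + 1),
        (n - j + k).choose (n - j) = (n - j + k).choose k := by
      intro j _
      rw [← Nat.choose_symm (by omega : k ≤ n - j + k)]
      congr 1
      omega
    rw [Finset.sum_congr rfl h2]
    have h3 := Finset.sum_range_reflect (fun j => (j + k).choose k) (n + 1)
    simp only [Nat.add_sub_cancel] at h3
    rw [h3, Nat.sum_range_add_choose n k]
    have h4 := Nat.choose_symm (show k + 1 ≤ n + (k + 1) by omega)
    rw [show n + (k + 1) - (k + 1) = n by omega] at h4
    rw [h4]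
    congr 1 <;> omega

/-- Counting lost phases at a cut vertex: the sum over compositions `(n₁,...,n_μ)` of `n`
into `μ` nonnegative parts, of `Σ_{i : 0 < n_i < n} (ν_i - 1)`, equals
`(C(n+μ-2, n-1) - 1)(ν - μ)` where `ν = Σᵢ νᵢ`. -/
theorem lost_phases_count (n μ : ℕ) (ν : Fin μ → ℕ) (hn : 2 ≤ n) (hμ : 2 ≤ μ)
    (hν : ∀ i, 1 ≤ ν i) :
    ∑ f ∈ Finset.Nat.antidiagonalTuple μ n,
        ∑ i ∈ Finset.univ.filter (fun i => 0 < f i ∧ f i < n), ((ν i : ℤ) - 1)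
      = (((n + μ - 2).choose (n - 1) : ℤ) - 1) * ((∑ i, (ν i : ℤ)) - (μ : ℤ)) := by
  obtain ⟨m, rfl⟩ : ∃ m, μ = m + 2 := ⟨μ - 2, by omega⟩
  have hone : 1 ≤ (n + (m + 2) - 2).choose (n - 1) := Nat.choose_pos (by omega)
  have hpascal : (n + (m + 2) - 1).choose n
      = (n + (m + 2) - 2).choose (n - 1) + (n + (m + 2) - 2).choose n := by
    obtain ⟨n', hn'⟩ : ∃ n', n = n' + 1 := ⟨n - 1, by omega⟩
    subst hn'
    have e1 : n' + 1 + (m + 2) - 1 = (n' + m + 1) + 1 := by omega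
    have e2 : n' + 1 + (m + 2) - 2 = n' + m + 1 := by omega
    rw [e1, e2, Nat.choose_succ_succ (n' + m + 1) n']
    simp
  -- key cardinality
  have hcard : ∀ i : Fin (m + 2),
      ((Finset.Nat.antidiagonalTuple (m + 2) n).filter fun f => 0 < f i ∧ f i < n).card
      = (n + (m + 2) - 2).choose (n - 1) - 1 := by
    intro i
    have hsplit : (Finset.Nat.antidiagonalTuple (m + 2) n).filter (fun f => ¬(0 < f i ∧ f i < n))
        = (Finset.Nat.antidiagonalTuple (m + 2) n).filter (fun f => f i = 0)
          ∪ (Finset.Nat.antidiagonalTuple (m + 2) n).filter (fun f => f i = n) := by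
      ext f
      simp only [Finset.mem_filter, Finset.mem_union, Finset.Nat.mem_antidiagonalTuple]
      constructor
      · rintro ⟨hf, h⟩
        have : f i ≤ n := hf ▸ Finset.single_le_sum (fun j _ => Nat.zero_le _) (mem_univ i)
        omega
      · rintro (⟨hf, h⟩ | ⟨hf, h⟩) <;> exact ⟨hf, by omega⟩
    have hdisj : Disjoint ((Finset.Nat.antidiagonalTuple (m + 2) n).filter (fun f => f i = 0))
        ((Finset.Nat.antidiagonalTuple (m + 2) n).filter (fun f => f i = n)) := by
      rw [Finset.disjoint_filter]
      intro f _ h0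
      omega
    have htot : (Finset.Nat.antidiagonalTuple (m + 2) n).card = (n + (m + 2) - 1).choose n := by
      rw [card_AT]
      congr 1 <;> omega
    have h0 : ((Finset.Nat.antidiagonalTuple (m + 2) n).filter fun f => f i = 0).card
        = (n + (m + 2) - 2).choose n := by
      rw [fiber_card_AT (m + 1) n 0 i (Nat.zero_le n), Nat.sub_zero, card_AT]
      congr 1 <;> omega
    have hn' : ((Finset.Nat.antidiagonalTuple (m + 2) n).filter fun f => f i = n).card = 1 := by
      rw [fiber_card_AT (m + 1) n n i le_rfl, Nat.sub_self,
        Finset.Nat.antidiagonalTuple_zero_right, Finset.card_singleton]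
    have key := Finset.card_filter_add_card_filter_not
      (s := Finset.Nat.antidiagonalTuple (m + 2) n) (p := fun f => 0 < f i ∧ f i < n)
    rw [hsplit, Finset.card_union_of_disjoint hdisj, h0, hn', htot] at key
    generalize hC : ((Finset.Nat.antidiagonalTuple (m + 2) n).filter
      fun f => 0 < f i ∧ f i < n).card = C at key ⊢
    clear hC h0 hn' htot hsplit hdisj i hν ν
    omega
  -- swap the two sums
  have hswap : ∑ f ∈ Finset.Nat.antidiagonalTuple (m + 2) n,
        ∑ i ∈ Finset.univ.filter (fun i => 0 < f i ∧ f i < n), ((ν i : ℤ) - 1)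
      = ∑ i : Fin (m + 2), ((ν i : ℤ) - 1) *
          (((Finset.Nat.antidiagonalTuple (m + 2) n).filter fun f => 0 < f i ∧ f i < n).card : ℤ) := by
    rw [Finset.sum_comm' (s := Finset.Nat.antidiagonalTuple (m + 2) n)
      (t := fun f => Finset.univ.filter (fun i => 0 < f i ∧ f i < n))
      (t' := Finset.univ)
      (s' := fun i => (Finset.Nat.antidiagonalTuple (m + 2) n).filter (fun f => 0 < f i ∧ f i < n))
      (by intro f i; simp only [Finset.mem_filter, Finset.mem_univ, true_and, and_comm])]
    refine Finset.sum_congr rfl fun i _ => ?_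
    rw [Finset.sum_const, nsmul_eq_mul, mul_comm]
  rw [hswap]
  clear hswap
  have hcast : ∀ i : Fin (m + 2),
      (((Finset.Nat.antidiagonalTuple (m + 2) n).filter fun f => 0 < f i ∧ f i < n).card : ℤ)
      = ((n + (m + 2) - 2).choose (n - 1) : ℤ) - 1 := by
    intro i
    rw [hcard i, Nat.cast_sub hone, Nat.cast_one]
  simp_rw [hcast]
  rw [← Finset.sum_mul, mul_comm]
  congr 1
  rw [Finset.sum_sub_distrib]
  simp [mul_comm]
end

section
/- If V is the gradient vector field of a discrete Morse function f, then f strictly decreases along any V-path: for a V-path α₀^(p), β₀^(p+1), α₁^(p), ..., one has f(α₀) ≥ f(β₀) > f(α₁) ≥ f(β₁) > ...; consequently there exist no nontrivial closed V-paths. -/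
/-- A discrete Morse function strictly decreases along any `V`-path of its gradient vector
field: for a `V`-path `α₀, β₀, α₁, β₁, …, α_k, β_k` (where `{αᵢ ⊂ βᵢ}` is a pair of `V`,
i.e. `Face (αᵢ) (βᵢ)` with `f βᵢ ≤ f αᵢ`, and `αᵢ₊₁ ≠ αᵢ` is a face of `βᵢ`), one has
`f(αᵢ₊₁) < f(βᵢ)` at every step; consequently the path never revisits an `α`-cell, so
there are no nontrivial closed `V`-paths. -/
theorem discrete_morse_decreasing_along_V_path {C : Type*}
    (Face : C → C → Prop) (f : C → ℝ)
    (morse_down : ∀ β : C, {α : C | Face α β ∧ f β ≤ f α}.Subsingleton)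
    (k : ℕ) (a b : Fin (k + 1) → C)
    (hpair : ∀ i : Fin (k + 1), Face (a i) (b i) ∧ f (b i) ≤ f (a i))
    (hstep : ∀ i : Fin k, Face (a i.succ) (b i.castSucc) ∧ a i.succ ≠ a i.castSucc) :
    (∀ i : Fin k, f (a i.succ) < f (b i.castSucc)) ∧
      ∀ i j : Fin (k + 1), i < j → a i ≠ a j := by
  have key : ∀ i : Fin k, f (a i.succ) < f (b i.castSucc) := by
    intro i
    by_contra h
    push_neg at h
    exact (hstep i).2 (morse_down (b i.castSucc) ⟨(hstep i).1, h⟩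
      ⟨(hpair i.castSucc).1, (hpair i.castSucc).2⟩)
  have anti : StrictAnti (fun i : Fin (k + 1) => f (a i)) := by
    rw [Fin.strictAnti_iff_succ_lt]
    intro i
    exact (key i).trans_le (hpair i.castSucc).2
  refine ⟨key, fun i j hij hne => ?_⟩
  exact absurd (congrArg f hne) (anti hij).ne'
end
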